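/- Let f : ℝⁿ → ℝ be convex, r > 0, ε ≥ 0, z ∈ ℝⁿ, x* := Prox_f^r(z). Suppose p ∈ ℝⁿ satisfies f(x) + ε‖x − p‖ ≥ f(p) + r(z − p)ᵀ(x − p) for all x ∈ ℝⁿ. Then ‖x* − p‖ ≤ ε/r. -/

import Mathlib

/-!
Minimality of `xs` for the proximal objective, tested along the segment towards any `y`, shows
that `r • (z - xs)` is a subgradient of `f` at `xs`. Adding this subgradient inequality at `p` to
the hypothesis on `p` at `xs` gives `r ‖xs - p‖² ≤ ε ‖xs - p‖`.
-/

open scoped RealInnerProductSpace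

open Filter Set Topology

lemma nonneg_of_forall_nonneg_add_mul {a b : ℝ}
    (h : ∀ t, 0 < t → t ≤ 1 → 0 ≤ a + t * b) : 0 ≤ a := by
  have hlim : Tendsto (fun t => a + t * b) (𝓝[>] 0) (𝓝 a) := by
    have : Continuous fun t : ℝ => a + t * b := by fun_prop
    simpa using (this.tendsto 0).mono_left nhdsWithin_le_nhds
  refine ge_of_tendsto hlim ?_
  filter_upwards [Ioc_mem_nhdsGT zero_lt_one] with t ht using h t ht.1 ht.2

section Prox

variable {E : Type*} [NormedAddCommGroup E] [InnerProductSpace ℝ E]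

theorem ConvexOn.add_inner_le_of_isMinOn_prox {f : E → ℝ} (hf : ConvexOn ℝ univ f) {r : ℝ}
    {z xs : E} (hxs : IsMinOn (fun y => f y + r / 2 * ‖y - z‖ ^ 2) univ xs) (y : E) :
    f xs + r * ⟪z - xs, y - xs⟫ ≤ f y := by
  -- minimality tested at `xs + t • (y - xs)`, divided by `t`; then let `t → 0⁺`
  suffices ∀ t, 0 < t → t ≤ 1 →
      0 ≤ (f y - f xs - r * ⟪z - xs, y - xs⟫) + t * (r / 2 * ‖y - xs‖ ^ 2) by
    linarith [nonneg_of_forall_nonneg_add_mul this]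
  intro t ht ht1
  have hconv : f (xs + t • (y - xs)) ≤ (1 - t) * f xs + t * f y := by
    have : f ((1 - t) • xs + t • y) ≤ (1 - t) • f xs + t • f y :=
      hf.2 (mem_univ xs) (mem_univ y) (by linarith) ht.le (by ring)
    rwa [show (1 - t) • xs + t • y = xs + t • (y - xs) by module] at this
  have hmin := isMinOn_univ_iff.1 hxs (xs + t • (y - xs))
  have hexpand : ‖xs + t • (y - xs) - z‖ ^ 2
      = ‖xs - z‖ ^ 2 - 2 * t * ⟪z - xs, y - xs⟫ + t ^ 2 * ‖y - xs‖ ^ 2 := by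
    rw [show xs + t • (y - xs) - z = t • (y - xs) - (z - xs) by abel, norm_sub_sq_real,
      norm_smul, real_inner_smul_left, real_inner_comm, Real.norm_eq_abs, mul_pow, sq_abs,
      norm_sub_rev z xs]
    ring
  simp only [hexpand] at hmin
  nlinarith

end Prox

theorem accumulation_point_bound (n : ℕ) (f : EuclideanSpace ℝ (Fin n) → ℝ)
    (hf : ConvexOn ℝ Set.univ f) (r ε : ℝ) (hr : 0 < r) (hε : 0 ≤ ε)
    (z xs p : EuclideanSpace ℝ (Fin n))
    (hxs : ∀ y, f xs + r / 2 * ‖xs - z‖ ^ 2 ≤ f y + r / 2 * ‖y - z‖ ^ 2)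
    (hp : ∀ x, f x + ε * ‖x - p‖ ≥ f p + r * ⟪z - p, x - p⟫) :
    ‖xs - p‖ ≤ ε / r := by
  have hsub := hf.add_inner_le_of_isMinOn_prox (isMinOn_univ_iff.2 hxs) p
  have hinner : ⟪z - p, xs - p⟫ + ⟪z - xs, p - xs⟫ = ‖xs - p‖ ^ 2 := by
    rw [← neg_sub xs p, inner_neg_right, ← sub_eq_add_neg, ← inner_sub_left,
      show z - p - (z - xs) = xs - p by abel, real_inner_self_eq_norm_sq]
  have hsq : r * ‖xs - p‖ ^ 2 ≤ ε * ‖xs - p‖ := by nlinarith [hp xs]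
  rcases (norm_nonneg (xs - p)).eq_or_lt with hzero | hpos
  · rw [← hzero]; positivity
  · rw [le_div_iff₀ hr]; nlinarith
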